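/- Let G be a finite group, H ≤ G a subgroup, N the normalizer of H in G, and r = [N:H]. Choose left-coset representatives g_1, …, g_n of H in G with g_1 = 1 and such that g_1, …, g_r ∈ N represent the cosets of H in N. Suppose r ≥ 3, and let integers k with 2 ≤ k < r and t ≥ 2 be given. Define π_j ∈ S_n for j ∈ {1,…,r} by g_i g_j H = g_{π_j(i)} H, the trace polynomials Tr_a ∈ ℤ[x_1,…,x_n], and the vectors a_1, …, a_l (l = binom(r-1,k-1)) associated to the k-element subsets of {1,…,r} containing 1. Then the polynomials Tr_{a_1}, Tr_{a_2}, …, Tr_{a_l}, viewed in ℂ[x_1, …, x_n], are linearly independent over ℂ. -/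

import Mathlib

/-!
Formalization of the linear-independence proposition for trace polynomials from
"Upper bounds for the number of number fields with prescribed Galois group"
by Mishra and Ray.
-/

open MvPolynomial

/-- The trace polynomial `Tr_a(x_1,…,x_n) = Σ_{i=1}^n Π_{j=1}^r x_{π_j(i)}^{a_j}`. -/
noncomputable def tracePoly {n r : ℕ} (π : Fin r → Equiv.Perm (Fin n)) (a : Fin r → ℕ) :
    MvPolynomial (Fin n) ℤ :=
  ∑ i : Fin n, ∏ j : Fin r, (X (π j i) : MvPolynomial (Fin n) ℤ) ^ a j

/-- The vector `a(B)` associated to a subset `B ⊆ {1,…,r}` containing `1` (here the point `0`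
of `Fin r`): the first entry is `t`, entries at other elements of `B` are `1`, and all
remaining entries are `0`. -/
def aVec {r : ℕ} (h0 : 0 < r) (t : ℕ) (B : Finset (Fin r)) : Fin r → ℕ :=
  fun i => if i = ⟨0, h0⟩ then t else if i ∈ B then 1 else 0

lemma tracePoly_eq {n r : ℕ} (π : Fin r → Equiv.Perm (Fin n)) (a : Fin r → ℕ) :
    tracePoly π a
      = ∑ i : Fin n, monomial (∑ j : Fin r, Finsupp.single (π j i) (a j)) (1 : ℤ) := by
  unfold tracePoly
  refine Finset.sum_congr rfl fun i _ => ?_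
  rw [monomial_sum_one]
  refine Finset.prod_congr rfl fun j _ => ?_
  rw [X_pow_eq_monomial]

lemma tracePoly_coeff {n r : ℕ} (π : Fin r → Equiv.Perm (Fin n)) (a : Fin r → ℕ)
    (m : Fin n →₀ ℕ) :
    coeff m (tracePoly π a)
      = ∑ i : Fin n, (if (∑ j : Fin r, Finsupp.single (π j i) (a j)) = m then (1:ℤ) else 0) := by
  rw [tracePoly_eq, coeff_sum]
  exact Finset.sum_congr rfl fun i _ => coeff_monomial _ _ _


/-- **Proposition.** Let `G` be a finite group, `H ≤ G` a subgroup of index `n`, `N` the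
normalizer of `H` in `G`, `r = [N:H] ≥ 3`, with left-coset representatives `g_1,…,g_n`
(`g_1 = 1`, and `g_1,…,g_r ∈ N` representing the cosets of `H` in `N`), and permutations
`π_j` determined by `g_i g_j H = g_{π_j(i)} H`. Let `2 ≤ k < r`, `t ≥ 2`, and let
`a_1,…,a_l` (`l = binom(r-1,k-1)`) be the vectors associated to an enumeration of the
`k`-element subsets of `{1,…,r}` containing `1`. Then the trace polynomials
`Tr_{a_1}, …, Tr_{a_l}`, viewed in `ℂ[x_1,…,x_n]`, are linearly independent over `ℂ`. -/
theorem statement5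
    (G : Type*) [Group G] [Finite G]
    (H : Subgroup G)
    (n : ℕ) (hn : 0 < n) (hidx : H.index = n)
    (r : ℕ) (hr3 : 3 ≤ r) (hrn : r ≤ n)
    (g : Fin n → G) (hg1 : g ⟨0, hn⟩ = 1)
    (hreps : ∀ x : G, ∃! i : Fin n, x⁻¹ * g i ∈ H)
    (hgN : ∀ i : Fin n, (i : ℕ) < r → g i ∈ Subgroup.normalizer (H : Set G))
    (hNreps : ∀ x ∈ Subgroup.normalizer (H : Set G), ∃! i : Fin n, (i : ℕ) < r ∧ x⁻¹ * g i ∈ H)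
    (π : Fin r → Equiv.Perm (Fin n))
    (hπ : ∀ (j : Fin r) (i : Fin n),
      (g (π j i))⁻¹ * (g i * g (Fin.castLE hrn j)) ∈ H)
    (k t : ℕ) (hk2 : 2 ≤ k) (hkr : k < r) (ht : 2 ≤ t)
    (l : ℕ) (hl : l = Nat.choose (r - 1) (k - 1))
    (B : Fin l → Finset (Fin r)) (hBinj : Function.Injective B)
    (hBmem : ∀ i : Fin l, (⟨0, by omega⟩ : Fin r) ∈ B i ∧ (B i).card = k) :
    LinearIndependent ℂ (fun i : Fin l =>
      MvPolynomial.map (Int.castRingHom ℂ) (tracePoly π (aVec (by omega) t (B i)))) := by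
  have hr0 : 0 < r := by omega
  set e0r : Fin r := ⟨0, hr0⟩ with he0r
  set e0n : Fin n := ⟨0, hn⟩ with he0n
  -- injectivity of j ↦ π j i
  have hinj : ∀ i : Fin n, Function.Injective fun j : Fin r => π j i := by
    intro i j j' h
    simp only at h
    have h1 := hπ j i
    have h2 := hπ j' i
    rw [h] at h1
    have hmem : (g (Fin.castLE hrn j))⁻¹ * g (Fin.castLE hrn j') ∈ H := by
      have h3 := H.mul_mem (H.inv_mem h1) h2
      have heq : ((g (π j' i))⁻¹ * (g i * g (Fin.castLE hrn j)))⁻¹ *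
          ((g (π j' i))⁻¹ * (g i * g (Fin.castLE hrn j'))) =
          (g (Fin.castLE hrn j))⁻¹ * g (Fin.castLE hrn j') := by group
      rwa [heq] at h3
    obtain ⟨w, hw, huniq⟩ := hreps (g (Fin.castLE hrn j))
    have e1 := huniq (Fin.castLE hrn j) (by simpa using H.one_mem)
    have e2 := huniq (Fin.castLE hrn j') hmem
    have hcc : Fin.castLE hrn j = Fin.castLE hrn j' := e1.trans e2.symm
    exact Fin.castLE_injective hrn hcc
  -- π j 0 = castLE j
  have hpi0 : ∀ j : Fin r, π j e0n = Fin.castLE hrn j := by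
    intro j
    have h1 := hπ j e0n
    rw [hg1, one_mul] at h1
    obtain ⟨w, hw, huniq⟩ := hreps (g (π j e0n))
    have e1 := huniq (π j e0n) (by simpa using H.one_mem)
    have e2 := huniq (Fin.castLE hrn j) h1
    exact e1.trans e2.symm
  -- π 0 i = 0 → i = 0
  have hzero : ∀ i : Fin n, π e0r i = e0n → i = e0n := by
    intro i hi
    have h1 := hπ e0r i
    have hc0 : Fin.castLE hrn e0r = e0n := rfl
    rw [hi, hc0, hg1] at h1
    have h2 : g i ∈ H := by simpa using h1
    obtain ⟨w, hw, huniq⟩ := hreps 1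
    have e1 := huniq i (by simpa using h2)
    have e2 := huniq e0n (by simp [hg1, H.one_mem])
    exact e1.trans e2.symm
  -- evaluation lemmas for the exponent finsupps
  have happly : ∀ (s : Fin n) (b : Fin r → ℕ) (j₀ : Fin r),
      (∑ j : Fin r, Finsupp.single (π j s) (b j)) (π j₀ s) = b j₀ := by
    intro s b j₀
    rw [Finsupp.finset_sum_apply]
    rw [Finset.sum_eq_single j₀]
    · simp [Finsupp.single_apply]
    · intro j _ hj
      rw [Finsupp.single_apply, if_neg]
      exact fun hp => hj (hinj s hp)
    · simp
  have happly0 : ∀ (s : Fin n) (b : Fin r → ℕ) (v : Fin n), (∀ j, π j s ≠ v) →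
      (∑ j : Fin r, Finsupp.single (π j s) (b j)) v = 0 := by
    intro s b v hv
    rw [Finsupp.finset_sum_apply]
    refine Finset.sum_eq_zero fun j _ => ?_
    rw [Finsupp.single_apply, if_neg (hv j)]
  -- aVec facts
  have haVec0 : ∀ S : Finset (Fin r), aVec hr0 t S e0r = t := fun S => if_pos rfl
  have haVec_ne : ∀ (S : Finset (Fin r)) (j : Fin r), j ≠ e0r →
      aVec hr0 t S j = if j ∈ S then 1 else 0 := fun S j hj => if_neg hj
  have haVec_t : ∀ (S : Finset (Fin r)) (j : Fin r), aVec hr0 t S j = t → j = e0r := by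
    intro S j hj
    by_contra hne
    rw [haVec_ne S j hne] at hj
    split at hj <;> omega
  -- the key injectivity of exponent data
  have key : ∀ (i i' : Fin l) (s : Fin n),
      (∑ j : Fin r, Finsupp.single (π j s) (aVec hr0 t (B i) j))
        = (∑ j : Fin r, Finsupp.single (π j e0n) (aVec hr0 t (B i') j)) →
      i = i' ∧ s = e0n := by
    intro i i' s h
    have hs : s = e0n := by
      have hL : (∑ j : Fin r, Finsupp.single (π j s) (aVec hr0 t (B i) j)) (π e0r s) = t := by
        rw [happly]; exact haVec0 _
      have hR := hL
      rw [h] at hR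
      -- hR : RHS evaluated at π e0r s equals t
      by_cases hex : ∃ j : Fin r, π j e0n = π e0r s
      · obtain ⟨j, hj⟩ := hex
        rw [← hj, happly] at hR
        have hj0 : j = e0r := haVec_t _ _ hR
        subst hj0
        have : π e0r e0n = e0n := by rw [hpi0]; rfl
        rw [this] at hj
        exact hzero s hj.symm
      · push_neg at hex
        rw [happly0 e0n _ _ hex] at hR
        omega
    subst hs
    have hval : ∀ j : Fin r, aVec hr0 t (B i) j = aVec hr0 t (B i') j := by
      intro j
      have := DFunLike.congr_fun h (π j e0n)
      rwa [happly, happly] at this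
    have hBeq : B i = B i' := by
      ext j
      by_cases hj : j = e0r
      · subst hj
        constructor <;> intro _
        · exact (hBmem i').1
        · exact (hBmem i).1
      · have hv := hval j
        rw [haVec_ne _ _ hj, haVec_ne _ _ hj] at hv
        constructor <;> intro hm
        · rw [if_pos hm] at hv
          by_contra hm'
          rw [if_neg hm'] at hv
          omega
        · rw [if_pos hm] at hv
          by_contra hm'
          rw [if_neg hm'] at hv
          omega
    exact ⟨hBinj hBeq, rfl⟩
  -- main argument via coefficients
  rw [Fintype.linearIndependent_iff]
  intro c hc i₀
  set m : Fin n →₀ ℕ := ∑ j : Fin r, Finsupp.single (π j e0n) (aVec hr0 t (B i₀) j) with hm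
  have hc' := congrArg (coeff m) hc
  rw [coeff_sum, coeff_zero] at hc'
  simp only [coeff_smul, smul_eq_mul] at hc'
  have hco : ∀ i : Fin l,
      coeff m (MvPolynomial.map (Int.castRingHom ℂ) (tracePoly π (aVec hr0 t (B i))))
        = if i = i₀ then 1 else 0 := by
    intro i
    rw [coeff_map, tracePoly_coeff]
    by_cases hii : i = i₀
    · subst hii
      rw [Finset.sum_eq_single e0n]
      · rw [if_pos rfl]; simp
      · intro s _ hs
        rw [if_neg]
        exact fun hEq => hs ((key i i s hEq).2)
      · simp
    · rw [if_neg hii, Finset.sum_eq_zero]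
      · simp
      · intro s _
        rw [if_neg]
        exact fun hEq => hii ((key i i₀ s hEq).1)
  have hc'' : ∑ i : Fin l, c i * (if i = i₀ then (1:ℂ) else 0) = 0 := by
    refine Eq.trans (Finset.sum_congr rfl fun i _ => ?_) hc'
    exact congrArg (fun z => c i * z) (hco i).symm
  simpa using hc''
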